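/- Lower bound on von Neumann entropy by log-determinant: Let n be a positive integer and ν_1, …, ν_n real numbers with ν_j ≥ 1 for all j, not all equal to 1, and set m = 2·Σ_{j=1}^n log ν_j (so that m = log of the product of the ν_j², the log-determinant of a Gaussian covariance matrix with symplectic spectrum {ν_j}). Then Σ_{j=1}^n h(ν_j) ≥ f_1(m). -/

import Mathlib

/-- The von Neumann entropy contribution of a single symplectic eigenvalue
`ν ≥ 1`: `h(ν) = ((ν+1)/2)·log((ν+1)/2) − ((ν−1)/2)·log((ν−1)/2)` (with
`h(1) = 0`). -/
noncomputable def hEnt (ν : ℝ) : ℝ :=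
  ((ν + 1) / 2) * Real.log ((ν + 1) / 2) - ((ν - 1) / 2) * Real.log ((ν - 1) / 2)

/-- The function `f_n(m)`: tight bound relating von Neumann entropy and
log-determinant of Gaussian states, with `coth t = cosh t / sinh t`. -/
noncomputable def f (n : ℕ) (m : ℝ) : ℝ :=
  ((n : ℝ) / 2) * (Real.log ((Real.exp (m / (n : ℝ)) - 1) / 4)
    + Real.exp (m / (2 * (n : ℝ))) *
        Real.log (Real.cosh (m / (4 * (n : ℝ))) / Real.sinh (m / (4 * (n : ℝ)))))

/-!
Write `ν_j = exp x_j` with `x_j ≥ 0`. Then `f 1 (2 s) = h (exp s)`, so the claim is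
`G (∑ x_j) ≤ ∑ G x_j` for `G = h ∘ exp`. This holds because `G` is concave on `[0, ∞)` with
`G 0 = 0`. Concavity: with `t = exp (-x)`, `G' x = artanh t / t = ∑ t ^ (2k) / (2k + 1)`, which is
increasing in `t`, hence decreasing in `x`.
-/

open Real Set

theorem ConcaveOn.map_add_le_add {f : ℝ → ℝ} (hf : ConcaveOn ℝ (Ici 0) f) (h0 : 0 ≤ f 0)
    {x y : ℝ} (hx : 0 ≤ x) (hy : 0 ≤ y) : f (x + y) ≤ f x + f y := by
  rcases (add_nonneg hx hy).eq_or_lt with hxy | hxy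
  · obtain ⟨rfl, rfl⟩ : x = 0 ∧ y = 0 := ⟨by linarith, by linarith⟩
    simpa using h0
  have chord : ∀ z, 0 ≤ z → z ≤ x + y → z / (x + y) * f (x + y) ≤ f z := by
    intro z hz0 hz1
    have hw : 0 ≤ z / (x + y) := div_nonneg hz0 hxy.le
    have hw' : 0 ≤ 1 - z / (x + y) := by rw [sub_nonneg, div_le_one hxy]; exact hz1
    have h := hf.2 (mem_Ici.2 le_rfl) (mem_Ici.2 hxy.le) hw' hw (by ring)
    simp only [smul_eq_mul, mul_zero, zero_add, div_mul_cancel₀ z hxy.ne'] at h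
    nlinarith
  have := add_le_add (chord x hx (by linarith)) (chord y hy (by linarith))
  rwa [← add_mul, ← add_div, div_self hxy.ne', one_mul] at this

theorem monotoneOn_log_one_add_sub_log_one_sub_div :
    MonotoneOn (fun t : ℝ => (log (1 + t) - log (1 - t)) / t) (Ioo 0 1) := by
  have series : ∀ t ∈ Ioo (0 : ℝ) 1,
      HasSum (fun k : ℕ => 2 * (1 / (2 * k + 1)) * t ^ (2 * k)) ((log (1 + t) - log (1 - t)) / t) := by
    intro t ⟨ht0, ht1⟩
    have h := (hasSum_log_sub_log_of_abs_lt_one (abs_lt.2 ⟨by linarith, ht1⟩)).div_const t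
    refine h.congr_fun fun k => ?_
    rw [pow_succ, ← mul_assoc, mul_div_cancel_right₀ _ ht0.ne']
  intro s hs t ht hst
  refine hasSum_le (fun k => ?_) (series s hs) (series t ht)
  gcongr
  exact hs.1.le

theorem hEnt_one : hEnt 1 = 0 := by
  simp [hEnt]

theorem continuous_hEnt : Continuous hEnt :=
  (Continuous.mul_log (by fun_prop)).sub (Continuous.mul_log (by fun_prop))

theorem hasDerivAt_hEnt {ν : ℝ} (hν : 1 < ν) :
    HasDerivAt hEnt ((log ((ν + 1) / 2) - log ((ν - 1) / 2)) / 2) ν := by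
  have hp := (hasDerivAt_mul_log (x := (ν + 1) / 2) (by positivity)).comp ν
    (((hasDerivAt_id ν).add_const 1).div_const 2)
  have hm := (hasDerivAt_mul_log (x := (ν - 1) / 2) (by linarith)).comp ν
    (((hasDerivAt_id ν).sub_const 1).div_const 2)
  refine (hp.sub hm).congr_deriv ?_
  ring

theorem hasDerivAt_hEnt_comp_exp {x : ℝ} (hx : 0 < x) :
    HasDerivAt (hEnt ∘ exp) ((log (1 + exp (-x)) - log (1 - exp (-x))) / exp (-x) / 2) x := by
  have hE : 1 < exp x := one_lt_exp_iff.2 hx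
  have ht : 0 < 2 * exp (-x) := by positivity
  have hplus : 1 + exp (-x) = (exp x + 1) / 2 * (2 * exp (-x)) := by
    rw [exp_neg]; field_simp
  have hminus : 1 - exp (-x) = (exp x - 1) / 2 * (2 * exp (-x)) := by
    rw [exp_neg]; field_simp
  refine ((hasDerivAt_hEnt hE).comp x (hasDerivAt_exp x)).congr_deriv ?_
  rw [hplus, hminus, log_mul (by positivity) ht.ne', log_mul (by linarith) ht.ne', exp_neg]
  field_simp
  ring

theorem concaveOn_hEnt_comp_exp : ConcaveOn ℝ (Ici 0) (hEnt ∘ exp) := by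
  refine AntitoneOn.concaveOn_of_deriv (convex_Ici 0)
    (continuous_hEnt.comp continuous_exp).continuousOn ?_ ?_ <;> rw [interior_Ici]
  · exact fun x hx => (hasDerivAt_hEnt_comp_exp hx).differentiableAt.differentiableWithinAt
  · intro x hx y hy hxy
    rw [(hasDerivAt_hEnt_comp_exp hx).deriv, (hasDerivAt_hEnt_comp_exp hy).deriv]
    have mem : ∀ z ∈ Ioi (0 : ℝ), exp (-z) ∈ Ioo 0 1 :=
      fun z hz => ⟨exp_pos _, exp_lt_one_iff.2 (neg_neg_of_pos hz)⟩
    refine div_le_div_of_nonneg_right ?_ zero_le_two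
    exact monotoneOn_log_one_add_sub_log_one_sub_div (mem y hy) (mem x hx)
      (exp_le_exp.2 (neg_le_neg hxy))

theorem hEnt_exp_sum_le {ι : Type*} (s : Finset ι) {x : ι → ℝ} (hx : ∀ i ∈ s, 0 ≤ x i) :
    hEnt (exp (∑ i ∈ s, x i)) ≤ ∑ i ∈ s, hEnt (exp (x i)) :=
  Finset.le_sum_of_subadditive_on_pred (hEnt ∘ exp) (0 ≤ ·) (by simp [hEnt_one])
    (fun _ _ ha hb => concaveOn_hEnt_comp_exp.map_add_le_add (by simp [hEnt_one]) ha hb)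
    (fun _ _ => add_nonneg) x hx

theorem cosh_half_div_sinh_half {s : ℝ} (hs : 0 < s) :
    cosh (s / 2) / sinh (s / 2) = (exp s + 1) / (exp s - 1) := by
  have hE : 1 < exp s := one_lt_exp_iff.2 hs
  have hsinh : sinh (s / 2) ≠ 0 := (sinh_pos_iff.2 (by linarith)).ne'
  have hsq : exp s = exp (s / 2) * exp (s / 2) := by rw [← exp_add, add_halves]
  rw [div_eq_div_iff hsinh (by linarith), cosh_eq, sinh_eq, exp_neg, hsq]
  field_simp

theorem f_one_two_mul {s : ℝ} (hs : 0 < s) : f 1 (2 * s) = hEnt (exp s) := by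
  have hE : 1 < exp s := one_lt_exp_iff.2 hs
  have hp : 0 < (exp s + 1) / 2 := by positivity
  have hm : 0 < (exp s - 1) / 2 := by linarith
  have hprod : (exp (2 * s) - 1) / 4 = (exp s + 1) / 2 * ((exp s - 1) / 2) := by
    rw [two_mul, exp_add]; ring
  have hquot : (exp s + 1) / (exp s - 1) = (exp s + 1) / 2 / ((exp s - 1) / 2) := by
    field_simp
  simp only [f, Nat.cast_one, div_one, mul_one]
  rw [mul_div_cancel_left₀ s two_ne_zero, show 2 * s / 4 = s / 2 by ring,
    cosh_half_div_sinh_half hs, hprod, hquot, log_mul hp.ne' hm.ne', log_div hp.ne' hm.ne', hEnt]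
  ring

theorem vonNeumann_entropy_ge_f_one_general (n : ℕ) (ν : Fin n → ℝ)
    (hν : ∀ j, 1 ≤ ν j) (hne : ∃ j, ν j ≠ 1) :
    ∑ j, hEnt (ν j) ≥ f 1 (2 * ∑ j, Real.log (ν j)) := by
  have hlog : ∀ j, 0 ≤ log (ν j) := fun j => log_nonneg (hν j)
  obtain ⟨j, hj⟩ := hne
  have hpos : 0 < ∑ j, log (ν j) :=
    Finset.sum_pos' (fun i _ => hlog i) ⟨j, Finset.mem_univ j, log_pos ((hν j).lt_of_ne' hj)⟩
  rw [ge_iff_le, f_one_two_mul hpos]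
  calc hEnt (exp (∑ j, log (ν j))) ≤ ∑ j, hEnt (exp (log (ν j))) :=
        hEnt_exp_sum_le Finset.univ fun i _ => hlog i
    _ = ∑ j, hEnt (ν j) := by
        simp only [exp_log (zero_lt_one.trans_le (hν _))]

/-- **Lower bound on the von Neumann entropy by the log-determinant.** For
symplectic eigenvalues `ν_j ≥ 1`, not all equal to `1`, with
`m = 2 ∑ j, log ν_j`, one has `∑ j, h(ν_j) ≥ f_1(m)`. -/
theorem vonNeumann_entropy_ge_f_one (n : ℕ) (hn : 0 < n) (ν : Fin n → ℝ)
    (hν : ∀ j, 1 ≤ ν j) (hne : ∃ j, ν j ≠ 1) :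
    ∑ j, hEnt (ν j) ≥ f 1 (2 * ∑ j, Real.log (ν j)) :=
  vonNeumann_entropy_ge_f_one_general n ν hν hne
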